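/- If n is odd with n ≥ 3, then r(2, F_3^n) ≥ 3^{(n-1)/2} + 1. -/

import Mathlib

/-!
The parabola `{(x, x ^ 2)}` in `K × K` is a Sidon set whenever `2 ≠ 0` in `K`: the sums
`x₁ + x₂` and `x₁ ^ 2 + x₂ ^ 2` determine `x₁ * x₂`, hence the pair `{x₁, x₂}`. For
`K = 𝔽_{3^m}` this gives `3 ^ m` points in a hyperplane of `𝔽₃^(2m+1)`, and one more point `x`
off the hyperplane can be added: a coincidence `a + b = c + d` involving `x` would force `x` or
`2x` into the hyperplane.
-/

def IsSidon {G : Type*} [AddCommGroup G] (A : Set G) : Prop :=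
  ∀ a ∈ A, ∀ b ∈ A, ∀ c ∈ A, ∀ d ∈ A, a + b = c + d →
    (a = c ∧ b = d) ∨ (a = d ∧ b = c)

section

variable {G : Type*} [AddCommGroup G]

theorem IsSidon.image {H F : Type*} [AddCommGroup H] [FunLike F G H] [AddHomClass F G H]
    {A : Set G} (hA : IsSidon A) (f : F) (hf : Function.Injective f) : IsSidon (f '' A) := by
  rintro _ ⟨a, ha, rfl⟩ _ ⟨b, hb, rfl⟩ _ ⟨c, hc, rfl⟩ _ ⟨d, hd, rfl⟩ h
  rw [← map_add, ← map_add] at h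
  rcases hA a ha b hb c hc d hd (hf h) with ⟨rfl, rfl⟩ | ⟨rfl, rfl⟩
  exacts [Or.inl ⟨rfl, rfl⟩, Or.inr ⟨rfl, rfl⟩]

theorem IsSidon.insert_of_notMem_addSubgroup {S : AddSubgroup G} {A : Set G}
    (hA : IsSidon A) (hAS : A ⊆ S) {x : G} (hx : x ∉ S) (h2x : x + x ∉ S) :
    IsSidon (insert x A) := by
  have hx_add : ∀ b ∈ A, ∀ c ∈ A, ∀ d ∈ A, x + b ≠ c + d := fun b hb c hc d hd h =>
    hx (by rw [eq_sub_of_add_eq h]; exact S.sub_mem (S.add_mem (hAS hc) (hAS hd)) (hAS hb))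
  have hx_two : ∀ c ∈ A, ∀ d ∈ A, x + x ≠ c + d := fun c hc d hd h =>
    h2x (h ▸ S.add_mem (hAS hc) (hAS hd))
  have hxA : x ∉ A := fun h => hx (hAS h)
  rintro a (rfl | ha) b (rfl | hb) c (rfl | hc) d (rfl | hd) h
  all_goals first
    | exact hA _ ha _ hb _ hc _ hd h
    | grind

end

theorem isSidon_range_sq {K : Type*} [Field K] (h2 : (2 : K) ≠ 0) :
    IsSidon (Set.range fun x : K => (x, x ^ 2)) := by
  rintro _ ⟨x₁, rfl⟩ _ ⟨x₂, rfl⟩ _ ⟨x₃, rfl⟩ _ ⟨x₄, rfl⟩ h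
  obtain ⟨hsum, hsq⟩ := Prod.ext_iff.mp h
  simp only [Prod.fst_add, Prod.snd_add] at hsum hsq
  have hprod : x₁ * x₂ = x₃ * x₄ :=
    mul_left_cancel₀ h2 (by linear_combination (x₁ + x₂ + x₃ + x₄) * hsum - hsq)
  have hroot : (x₃ - x₁) * (x₃ - x₂) = 0 := by linear_combination hprod - x₃ * hsum
  rcases mul_eq_zero.mp hroot with h | h
  · obtain rfl : x₃ = x₁ := sub_eq_zero.mp h
    obtain rfl : x₄ = x₂ := by linear_combination -hsum
    exact Or.inl ⟨rfl, rfl⟩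
  · obtain rfl : x₃ = x₂ := sub_eq_zero.mp h
    obtain rfl : x₄ = x₁ := by linear_combination -hsum
    exact Or.inr ⟨rfl, rfl⟩

theorem exists_isSidon_prod_zmod_three_card_eq {K : Type*} [Field K] [Fintype K]
    (h2 : (2 : K) ≠ 0) :
    ∃ C : Finset ((K × K) × ZMod 3), IsSidon (C : Set ((K × K) × ZMod 3)) ∧
      C.card = Fintype.card K + 1 := by
  classical
  let P : Finset (K × K) := Finset.univ.image fun x => (x, x ^ 2)
  let ι : K × K →+ (K × K) × ZMod 3 := AddMonoidHom.inl _ _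
  have hι : Function.Injective ι := Prod.mk_left_injective 0
  refine ⟨insert (0, 1) (P.image ι), ?_, ?_⟩
  · have hx : ((0 : K × K), (1 : ZMod 3)) ∉ (AddMonoidHom.snd _ _).ker := by
      simp only [AddMonoidHom.mem_ker, AddMonoidHom.coe_snd]; decide
    have h2x : ((0 : K × K), (1 : ZMod 3)) + (0, 1) ∉ (AddMonoidHom.snd _ _).ker := by
      simp only [AddMonoidHom.mem_ker, AddMonoidHom.coe_snd, Prod.snd_add]; decide
    have hsidon := ((isSidon_range_sq h2).image ι hι).insert_of_notMem_addSubgroup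
      (by rintro _ ⟨_, -, rfl⟩; rfl) hx h2x
    convert hsidon using 2
    simp [P]
  · have hP : P.card = Fintype.card K :=
      Finset.card_image_of_injective _ fun x y h => congrArg Prod.fst h
    rw [Finset.card_insert_of_notMem (by simp [ι]), Finset.card_image_of_injective _ hι, hP]

/-- If `n` is odd with `n ≥ 3`, then `r(2, F_3^n) ≥ 3^((n-1)/2) + 1`:
there is a Sidon set of that size in `F_3^n`. -/
theorem sidon_lower_bound_odd (n : ℕ) (hn : Odd n) (hn3 : 3 ≤ n) :
    ∃ C : Finset (Fin n → ZMod 3), IsSidon (C : Set (Fin n → ZMod 3)) ∧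
      C.card = 3 ^ ((n - 1) / 2) + 1 := by
  obtain ⟨m, rfl⟩ := hn
  have hm : m ≠ 0 := by omega
  let K := GaloisField 3 m
  let _ : Fintype K := Fintype.ofFinite K
  have h2 : (2 : K) ≠ 0 := Ring.two_ne_zero (by rw [ringChar.eq K 3]; decide)
  obtain ⟨C, hC, hcard⟩ := exists_isSidon_prod_zmod_three_card_eq h2
  have hdim : Module.finrank (ZMod 3) ((K × K) × ZMod 3) =
      Module.finrank (ZMod 3) (Fin (2 * m + 1) → ZMod 3) := by
    rw [Module.finrank_prod, Module.finrank_prod, Module.finrank_self,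
      Module.finrank_fin_fun, GaloisField.finrank 3 hm]
    ring
  let e := LinearEquiv.ofFinrankEq _ _ hdim
  refine ⟨C.map e.toEquiv.toEmbedding, ?_, ?_⟩
  · rw [Finset.coe_map]
    exact hC.image e e.injective
  · rw [Finset.card_map, hcard, Fintype.card_eq_nat_card, GaloisField.card 3 m hm]
    congr 2
    omega
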